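/- arXiv:2501.07941 — 3 statements merged into one kernel-verified Lean document; each statement's English description precedes it below -/
import Mathlib

section
/- Let V be an F-vector space, W ⊆ V a subspace, val a valuation on V, and let 𝕨 = val|_W, which is a valuation on W. Set L = {w ∈ W : val(w) ≥ 0} and L' = {v ∈ V : val(v) ≥ 0}. Then the following are equivalent: (1) val is maximal, with respect to the pointwise partial order on valuations (val₁ ≥ val₂ iff val₁(v) ≥ val₂(v) for all v ∈ V), among all valuations on V whose restriction to W equals 𝕨; (2) the ℚ-linear map L/qL → L'/qL' induced by the inclusion L ⊆ L' is an isomorphism; (3) the A₀-module L'/L is divisible by q, i.e. for every x ∈ L' there exists y ∈ L' with x − q·y ∈ L. -/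
/-!
STATEMENT 3.  Let `F = ℚ(q)`, `ν` the q-adic valuation on `F` (order of vanishing at `q = 0`),
and `A₀ = {f : ν f ≥ 0}`.  A valuation on an `F`-vector space `V` is a function
`val : V → ℤ ∪ {∞}` with the three axioms below.  Given a subspace `W ⊆ V` and a valuation
`val` on `V`, set `L = {w ∈ W : val w ≥ 0}` and `L' = {v ∈ V : val v ≥ 0}`.
The theorem asserts the equivalence of:
(1) `val` is maximal (pointwise order) among valuations on `V` restricting to `val|_W` on `W`;
(2) the induced `ℚ`-linear map `L/qL → L'/qL'` is an isomorphism (expressed concretely as: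
    the map is injective, i.e. `L ∩ qL' ⊆ qL`, and surjective, i.e. `L' ⊆ L + qL'`),
(3) `L'/L` is divisible by `q`: every `x ∈ L'` admits `y ∈ L'` with `x − q·y ∈ L`.
-/

noncomputable section

/-- The base field `F = ℚ(q)`. -/
abbrev FF : Type := RatFunc ℚ

/-- The indeterminate `q`. -/
def qq : FF := RatFunc.X

-- The q-adic valuation on `F = ℚ(q)`: the order of vanishing at `q = 0`.
open Classical in
def nu (f : FF) : WithTop ℤ :=
  if f = 0 then ⊤
  else (((Polynomial.rootMultiplicity 0 f.num : ℤ) -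
          (Polynomial.rootMultiplicity 0 f.denom : ℤ) : ℤ) : WithTop ℤ)

/-- A valuation on an `F`-vector space `V`. -/
def IsValuation {V : Type*} [AddCommGroup V] [Module FF V] (val : V → WithTop ℤ) : Prop :=
  (∀ v : V, val v = ⊤ ↔ v = 0) ∧
  (∀ (c : FF) (v : V), val (c • v) = nu c + val v) ∧
  (∀ v w : V, min (val v) (val w) ≤ val (v + w))

lemma qq_ne_zero : qq ≠ 0 := RatFunc.X_ne_zero

lemma nu_qq : nu qq = 1 := by
  rw [nu, if_neg qq_ne_zero]
  rw [show (qq).num = Polynomial.X from RatFunc.num_X, show (qq).denom = 1 from RatFunc.denom_X]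
  rw [show (Polynomial.X : Polynomial ℚ) = Polynomial.X - Polynomial.C 0 by simp]
  rw [Polynomial.rootMultiplicity_X_sub_C_self,
    Polynomial.rootMultiplicity_eq_zero (by simp [Polynomial.IsRoot])]
  norm_num

lemma nu_zero : nu 0 = ⊤ := by rw [nu]; exact if_pos rfl

lemma wt_add_one_le {a b : WithTop ℤ} (h : a < b) : a + 1 ≤ b := by
  induction b using WithTop.recTopCoe with
  | top => exact le_top
  | coe b =>
    induction a using WithTop.recTopCoe with
    | top => exact absurd h (by simp)
    | coe a =>
      rw [← WithTop.coe_one, ← WithTop.coe_add, WithTop.coe_le_coe]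
      exact_mod_cast Int.add_one_le_of_lt (by exact_mod_cast h)

lemma wt_lt_add_one {a : WithTop ℤ} (h : a ≠ ⊤) : a < a + 1 := by
  induction a using WithTop.recTopCoe with
  | top => simp at h
  | coe a => rw [← WithTop.coe_one, ← WithTop.coe_add, WithTop.coe_lt_coe]; omega

lemma wt_le_of_lt_add_one {k : ℤ} {b : WithTop ℤ} (h : (k : WithTop ℤ) < b + 1) :
    (k : WithTop ℤ) ≤ b := by
  induction b using WithTop.recTopCoe with
  | top => exact le_top
  | coe b =>
    rw [← WithTop.coe_one, ← WithTop.coe_add, WithTop.coe_lt_coe] at h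
    rw [WithTop.coe_le_coe]
    omega

/-- The key equivalence: (1) maximality ↔ (3) q-divisibility of L'/L. -/
lemma key_equiv {V : Type*} [AddCommGroup V] [Module FF V]
    (W : Submodule FF V) (val : V → WithTop ℤ) (hval : IsValuation val) :
    (∀ u : V → WithTop ℤ, IsValuation u → (∀ w ∈ W, u w = val w) →
        (∀ v : V, val v ≤ u v) → ∀ v : V, u v = val v) ↔
      (∀ x : V, 0 ≤ val x →
        ∃ y : V, 0 ≤ val y ∧ ((x - qq • y) ∈ W ∧ 0 ≤ val (x - qq • y))) := by
  classical
  obtain ⟨htop, hsmul, hadd⟩ := hval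
  have val0 : val (0:V) = ⊤ := (htop 0).mpr rfl
  by_cases hV : ∀ v : V, v = 0
  · constructor
    · intro _ x _
      refine ⟨0, ?_, ?_, ?_⟩
      · rw [val0]; exact le_top
      · rw [hV (x - qq • 0)]; exact W.zero_mem
      · rw [hV (x - qq • 0), val0]; exact le_top
    · intro _ u hu _ _ v
      rw [hV v, (hu.1 0).mpr rfl, val0]
  push_neg at hV
  obtain ⟨v₀, hv₀⟩ := hV
  have val_ne_top : ∀ {v : V}, v ≠ 0 → val v ≠ ⊤ := fun h ht => h ((htop _).mp ht)
  have nu_mul : ∀ a b : FF, nu (a * b) = nu a + nu b := by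
    intro a b
    have h1 := hsmul (a * b) v₀
    rw [mul_smul, hsmul, hsmul, ← add_assoc] at h1
    exact WithTop.add_right_cancel (val_ne_top hv₀) h1.symm
  have nu_one : nu 1 = 0 := by
    have h1 := hsmul 1 v₀
    rw [one_smul] at h1
    have h2 : nu 1 + val v₀ = 0 + val v₀ := by rw [zero_add, ← h1]
    exact WithTop.add_right_cancel (val_ne_top hv₀) h2
  have nu_ne_top : ∀ {a : FF}, a ≠ 0 → nu a ≠ ⊤ := by
    intro a ha ht
    have h2 : a • v₀ ≠ 0 := smul_ne_zero ha hv₀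
    exact val_ne_top h2 (by rw [hsmul, ht, top_add])
  have nu_inv : ∀ {a : FF}, a ≠ 0 → nu a + nu a⁻¹ = 0 := by
    intro a ha; rw [← nu_mul, mul_inv_cancel₀ ha, nu_one]
  have nu_pow : ∀ n : ℕ, nu (qq ^ n) = ((n : ℤ) : WithTop ℤ) := by
    intro n; induction n with
    | zero => simpa using nu_one
    | succ n ih =>
      rw [pow_succ, nu_mul, ih, nu_qq]
      push_cast; ring
  have nu_negone : nu (-1 : FF) = 0 := by
    have h := nu_mul (-1) (-1)
    rw [neg_one_mul, neg_neg, nu_one] at h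
    obtain ⟨m, hm⟩ := WithTop.ne_top_iff_exists.mp (nu_ne_top (by norm_num : (-1:FF) ≠ 0))
    rw [← hm] at h ⊢
    have h2 : m + m = 0 := by exact_mod_cast h.symm
    have h3 : m = 0 := by omega
    rw [h3]; norm_cast
  have gneg : ∀ (g : V → WithTop ℤ), (∀ (c : FF) (v : V), g (c • v) = nu c + g v) →
      ∀ v : V, g (-v) = g v := by
    intro g hg v
    rw [← neg_one_smul FF v, hg, nu_negone, zero_add]
  have val_neg := gneg val hsmul
  have val_sub : ∀ v w : V, min (val v) (val w) ≤ val (v - w) := by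
    intro v w
    have h := hadd v (-w)
    rwa [val_neg, ← sub_eq_add_neg] at h
  have nu_add : ∀ a b : FF, min (nu a) (nu b) ≤ nu (a + b) := by
    intro a b
    have h := hadd (a • v₀) (b • v₀)
    rw [← add_smul, hsmul, hsmul, hsmul, min_add_add_right] at h
    exact (WithTop.add_le_add_iff_right (val_ne_top hv₀)).mp h
  have val_eq_of_lt : ∀ v w : V, val v < val (v - w) → val w = val v := by
    intro v w h
    have h2 : min (val (v - w)) (val w) ≤ val v := by
      have := hadd (v - w) w; rwa [sub_add_cancel] at this
    have h3 : min (val v) (val (v - w)) ≤ val w := by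
      have := val_sub v (v - w); rwa [sub_sub_cancel] at this
    refine le_antisymm ?_ ?_
    · rcases min_le_iff.mp h2 with hc | hc
      · exact absurd hc h.not_ge
      · exact hc
    · rw [min_eq_left h.le] at h3; exact h3
  constructor
  · -- (1) ⇒ (3), by contraposition
    intro hmax
    by_contra hndiv
    push_neg at hndiv
    obtain ⟨x, hx0, hx⟩ := hndiv
    -- x ≠ 0
    have hxne : x ≠ 0 := by
      rintro rfl
      have := hx 0 (by rw [val0]; exact le_top)
      rw [smul_zero, sub_zero] at this
      have h2 := this W.zero_mem
      rw [val0] at h2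
      exact absurd h2 (by simp)
    have hxt : val x ≠ ⊤ := val_ne_top hxne
    -- val x = 0
    have hxv : val x = 0 := by
      by_contra hne
      have h1 : (1 : WithTop ℤ) ≤ val x := by
        rcases lt_or_ge (val x) 1 with h | h
        · exfalso
          apply hne
          obtain ⟨m, hm⟩ := WithTop.ne_top_iff_exists.mp hxt
          rw [← hm] at h hx0 ⊢
          norm_cast at h hx0 ⊢
          omega
        · exact h
      set y := qq⁻¹ • x with hy
      have hqy : qq • y = x := smul_inv_smul₀ qq_ne_zero x
      have hyval : (0 : WithTop ℤ) ≤ val y := by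
        by_contra hc
        push_neg at hc
        have : val x < 1 := by
          rw [← hqy, hsmul, nu_qq]
          calc (1:WithTop ℤ) + val y < 1 + 0 :=
                (WithTop.add_lt_add_iff_left (by norm_num)).mpr hc
            _ = 1 := by rw [add_zero]
        exact absurd h1 this.not_ge
      have := hx y hyval
      rw [hqy, sub_self] at this
      have h2 := this W.zero_mem
      rw [val0] at h2
      exact absurd h2 (by simp)
    -- the modified valuation u
    set P : V → Prop := fun v => ∃ c : FF, val v < val (v - c • x) ∧ val v ≤ nu c with hPdef
    set u : V → WithTop ℤ := fun v => if P v then val v + 1 else val v with hu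
    have hu_ge : ∀ v, val v ≤ u v := by
      intro v; simp only [hu]
      split
      · exact le_add_of_nonneg_right (by norm_num)
      · exact le_rfl
    have hu_le : ∀ v, u v ≤ val v + 1 := by
      intro v; simp only [hu]
      split
      · exact le_rfl
      · exact le_add_of_nonneg_right (by norm_num)
    have hu_of_P : ∀ v, P v → u v = val v + 1 := by
      intro v h; simp only [hu]; rw [if_pos h]
    have hu_of_notP : ∀ v, ¬P v → u v = val v := by
      intro v h; simp only [hu]; rw [if_neg h]
    have hP_top : ∀ v : V, val v = ⊤ → ¬P v := by
      rintro v hv ⟨c, h1, _⟩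
      rw [hv] at h1
      exact not_top_lt h1
    -- P is invariant under scaling
    have hP_smul : ∀ (a : FF), a ≠ 0 → ∀ v : V, P v → P (a • v) := by
      rintro a ha v ⟨c, h1, h2⟩
      refine ⟨a * c, ?_, ?_⟩
      · have : a • v - (a * c) • x = a • (v - c • x) := by
          rw [mul_smul, ← smul_sub]
        rw [this, hsmul, hsmul]
        exact (WithTop.add_lt_add_iff_left (nu_ne_top ha)).mpr h1
      · rw [nu_mul, hsmul]
        exact add_le_add le_rfl h2
    have hP_smul_iff : ∀ (a : FF), a ≠ 0 → ∀ v : V, P (a • v) ↔ P v := by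
      intro a ha v
      constructor
      · intro h
        have := hP_smul a⁻¹ (inv_ne_zero ha) _ h
        rwa [inv_smul_smul₀ ha] at this
      · exact hP_smul a ha v
    -- ¬ P w for w ∈ W
    have hPW : ∀ w ∈ W, ¬P w := by
      rintro w hwW ⟨c, h1, h2⟩
      have hwne : w ≠ 0 := by
        rintro rfl
        rw [val0] at h1
        exact not_top_lt h1
      have hcne : c ≠ 0 := by
        rintro rfl
        rw [zero_smul, sub_zero] at h1
        exact lt_irrefl _ h1
      have hcx : val (c • x) = nu c := by rw [hsmul, hxv, add_zero]
      have hceq : nu c = val w := by rw [← hcx]; exact val_eq_of_lt w (c • x) h1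
      obtain ⟨m, hm⟩ := WithTop.ne_top_iff_exists.mp (nu_ne_top hcne)
      obtain ⟨mi, hmi⟩ := WithTop.ne_top_iff_exists.mp (nu_ne_top (inv_ne_zero hcne))
      have hmm : mi = -m := by
        have h := nu_inv hcne
        rw [← hm, ← hmi] at h
        have h2 : m + mi = 0 := by exact_mod_cast h
        omega
      have hnuqinv : nu qq⁻¹ = ((-1 : ℤ) : WithTop ℤ) := by
        obtain ⟨k, hk⟩ := WithTop.ne_top_iff_exists.mp (nu_ne_top (inv_ne_zero qq_ne_zero))
        have h := nu_inv qq_ne_zero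
        rw [nu_qq, ← hk] at h
        have h2 : 1 + k = 0 := by exact_mod_cast h
        have h3 : k = -1 := by omega
        rw [← hk, h3]
      set y : V := (qq⁻¹ * c⁻¹) • (c • x - w) with hy
      have hqy : qq • y = x - c⁻¹ • w := by
        rw [hy, ← mul_smul]
        have : qq * (qq⁻¹ * c⁻¹) = c⁻¹ := by
          rw [← mul_assoc, mul_inv_cancel₀ qq_ne_zero, one_mul]
        rw [this, smul_sub, inv_smul_smul₀ hcne]
      have hsubval : ((m : ℤ) : WithTop ℤ) + 1 ≤ val (w - c • x) := by
        have := wt_add_one_le h1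
        rw [← hceq, ← hm] at this
        exact this
      have hyval : (0 : WithTop ℤ) ≤ val y := by
        rw [hy, hsmul, nu_mul, hnuqinv, ← hmi, hmm]
        have hvv : val (c • x - w) = val (w - c • x) := by
          rw [show c • x - w = -(w - c • x) by abel, val_neg]
        rw [hvv]
        calc (0 : WithTop ℤ) = ((-1 : ℤ) : WithTop ℤ) + ((-m : ℤ) : WithTop ℤ) + ((m : ℤ) + 1 : ℤ) := by
              rw [← WithTop.coe_add, ← WithTop.coe_add]
              have hz : (-1 : ℤ) + -m + (m + 1) = 0 := by ring
              rw [hz, WithTop.coe_zero]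
          _ ≤ ((-1 : ℤ) : WithTop ℤ) + ((-m : ℤ) : WithTop ℤ) + val (w - c • x) := by
              apply add_le_add le_rfl
              exact_mod_cast hsubval
          _ = _ := by rw [add_assoc]
      have hmem : x - qq • y ∈ W := by
        rw [hqy, sub_sub_cancel]
        exact W.smul_mem _ hwW
      have hval2 : (0 : WithTop ℤ) ≤ val (x - qq • y) := by
        rw [hqy, sub_sub_cancel, hsmul, ← hmi, hmm, ← hceq, ← hm, ← WithTop.coe_add]
        norm_cast; omega
      exact absurd hval2 (hx y hyval hmem).not_ge
    -- u is a valuation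
    have hu_val : IsValuation u := by
      refine ⟨?_, ?_, ?_⟩
      · intro v
        constructor
        · intro hv
          have h1 : val v + 1 = ⊤ := eq_top_iff.mpr (hv ▸ hu_le v)
          rcases WithTop.add_eq_top.mp h1 with h | h
          · exact (htop v).mp h
          · exact absurd h (by norm_num)
        · rintro rfl
          rw [hu_of_notP 0 (hP_top 0 val0), val0]
      · intro a v
        by_cases ha : a = 0
        · subst ha
          rw [zero_smul, nu_zero, top_add, hu_of_notP 0 (hP_top 0 val0), val0]
        by_cases hv : v = 0
        · subst hv
          rw [smul_zero, hu_of_notP 0 (hP_top 0 val0), val0, add_top]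
        by_cases hp : P v
        · rw [hu_of_P _ (hP_smul a ha v hp), hu_of_P _ hp, hsmul, add_assoc]
        · rw [hu_of_notP _ (fun h => hp ((hP_smul_iff a ha v).mp h)), hu_of_notP _ hp, hsmul]
      · intro v w
        by_cases htw : val (v + w) = ⊤
        · rw [hu_of_notP _ (hP_top _ htw), htw]; exact le_top
        by_cases hle : min (u v) (u w) ≤ val (v + w)
        · exact hle.trans (hu_ge _)
        push_neg at hle
        have hv1 : val (v + w) < u v := lt_of_lt_of_le hle (min_le_left _ _)
        have hw1 : val (v + w) < u w := lt_of_lt_of_le hle (min_le_right _ _)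
        have hkv : val (v + w) ≤ val v := by
          obtain ⟨k, hk⟩ := WithTop.ne_top_iff_exists.mp htw
          rw [← hk]
          exact wt_le_of_lt_add_one (by rw [hk]; exact lt_of_lt_of_le hv1 (hu_le v))
        have hkw : val (v + w) ≤ val w := by
          obtain ⟨k, hk⟩ := WithTop.ne_top_iff_exists.mp htw
          rw [← hk]
          exact wt_le_of_lt_add_one (by rw [hk]; exact lt_of_lt_of_le hw1 (hu_le w))
        have getc : ∀ z : V, val (v + w) ≤ val z → val (v + w) < u z →
            ∃ c : FF, val (v + w) < val (z - c • x) ∧ val (v + w) ≤ nu c := by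
          intro z h1 h2
          rcases eq_or_lt_of_le h1 with he | hlt
          · have hp : P z := by
              by_contra hp
              rw [hu_of_notP z hp, ← he] at h2
              exact lt_irrefl _ h2
            obtain ⟨c, hc1, hc2⟩ := hp
            exact ⟨c, he ▸ hc1, he ▸ hc2⟩
          · exact ⟨0, by rwa [zero_smul, sub_zero], by rw [nu_zero]; exact le_top⟩
        obtain ⟨c, hc1, hc2⟩ := getc v hkv hv1
        obtain ⟨c', hc'1, hc'2⟩ := getc w hkw hw1
        have hPvw : P (v + w) := by
          refine ⟨c + c', ?_, ?_⟩
          · have hrw : v + w - (c + c') • x = (v - c • x) + (w - c' • x) := by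
              rw [add_smul]; abel
            rw [hrw]
            exact lt_of_lt_of_le (lt_min hc1 hc'1) (hadd _ _)
          · exact le_trans (le_min hc2 hc'2) (nu_add c c')
        rw [hu_of_P _ hPvw]
        -- min (u v) (u w) ≤ val (v+w) + 1
        rcases le_total (val v) (val w) with hvw | hvw
        · have hveq : val v = val (v + w) := le_antisymm (by
            calc val v = min (val v) (val w) := (min_eq_left hvw).symm
              _ ≤ val (v + w) := hadd v w) hkv
          calc min (u v) (u w) ≤ u v := min_le_left _ _
            _ ≤ val v + 1 := hu_le v
            _ = val (v + w) + 1 := by rw [hveq]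
        · have hveq : val w = val (v + w) := le_antisymm (by
            calc val w = min (val v) (val w) := (min_eq_right hvw).symm
              _ ≤ val (v + w) := hadd v w) hkw
          calc min (u v) (u w) ≤ u w := min_le_right _ _
            _ ≤ val w + 1 := hu_le w
            _ = val (v + w) + 1 := by rw [hveq]
    -- u agrees with val on W, u ≥ val, hence u = val; but u x ≠ val x
    have hfinal := hmax u hu_val (fun w hw => hu_of_notP w (hPW w hw)) hu_ge x
    have hPx : P x := by
      refine ⟨1, ?_, ?_⟩
      · rw [one_smul, sub_self, val0]
        exact Ne.lt_top hxt
      · rw [nu_one, hxv]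
    rw [hu_of_P x hPx] at hfinal
    exact absurd hfinal.symm (wt_lt_add_one hxt).ne
  · -- (3) ⇒ (1)
    intro hdiv u hu hW hge v
    obtain ⟨u1, u2, u3⟩ := hu
    by_contra hne
    have hlt : val v < u v := lt_of_le_of_ne (hge v) (Ne.symm hne)
    have hvne : v ≠ 0 := by
      rintro rfl
      rw [val0, (u1 0).mpr rfl] at hlt
      exact lt_irrefl _ hlt
    have key2 : ∀ z : V, val z = 0 → 0 < u z → False := by
      intro z hz huz
      obtain ⟨y, hy, hyW, hy2⟩ := hdiv z (by rw [hz])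
      set w := z - qq • y with hwdef
      have huw : u w = val w := hW w hyW
      have hu_neg := gneg u u2
      have h1le : (1 : WithTop ℤ) ≤ u w := by
        have hmin : min (u z) (u (-(qq • y))) ≤ u w := by
          have := u3 z (-(qq • y))
          rwa [← sub_eq_add_neg, ← hwdef] at this
        rw [hu_neg] at hmin
        have hz1 : (1 : WithTop ℤ) ≤ u z := by
          have := wt_add_one_le huz; rwa [zero_add] at this
        have hqy1 : (1 : WithTop ℤ) ≤ u (qq • y) := by
          rw [u2, nu_qq]
          calc (1 : WithTop ℤ) = 1 + 0 := (add_zero 1).symm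
            _ ≤ 1 + u y := add_le_add le_rfl (le_trans hy (hge y))
        exact le_trans (le_min hz1 hqy1) hmin
      have hw1 : (1 : WithTop ℤ) ≤ val w := huw ▸ h1le
      have hzge : (1 : WithTop ℤ) ≤ val z := by
        have hmin : min (val w) (val (qq • y)) ≤ val z := by
          have := hadd w (qq • y)
          rwa [hwdef, sub_add_cancel] at this
        have hqy1 : (1 : WithTop ℤ) ≤ val (qq • y) := by
          rw [hsmul, nu_qq]
          calc (1 : WithTop ℤ) = 1 + 0 := (add_zero 1).symm
            _ ≤ 1 + val y := add_le_add le_rfl hy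
        exact le_trans (le_min hw1 hqy1) hmin
      rw [hz] at hzge
      exact absurd hzge (by exact_mod_cast (by omega : ¬ (1:ℤ) ≤ 0))
    obtain ⟨m, hm⟩ := WithTop.ne_top_iff_exists.mp (val_ne_top hvne)
    rcases le_or_gt 0 m with hm0 | hm0
    · set n := m.toNat with hn
      have hqn : (qq : FF) ^ n ≠ 0 := pow_ne_zero _ qq_ne_zero
      set v' := ((qq : FF) ^ n)⁻¹ • v with hv'
      have hvv : ((qq : FF) ^ n) • v' = v := smul_inv_smul₀ hqn v
      have hnm : ((n : ℤ) : WithTop ℤ) = ((m : ℤ) : WithTop ℤ) := by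
        norm_cast; omega
      have hval' : val v' = 0 := by
        have h := hsmul ((qq : FF) ^ n) v'
        rw [hvv, nu_pow, hnm, ← hm] at h
        have h2 : ((m : ℤ) : WithTop ℤ) + 0 = (m : ℤ) + val v' := by rw [add_zero]; exact h
        exact (WithTop.add_left_cancel (WithTop.coe_ne_top) h2).symm
      have hu' : 0 < u v' := by
        have h := u2 ((qq : FF) ^ n) v'
        rw [hvv, nu_pow, hnm] at h
        have : ((m : ℤ) : WithTop ℤ) + 0 < (m : ℤ) + u v' := by
          rw [add_zero, ← h, hm]
          exact hlt
        exact (WithTop.add_lt_add_iff_left (WithTop.coe_ne_top)).mp this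
      exact key2 v' hval' hu'
    · set n := (-m).toNat with hn
      set v' := ((qq : FF) ^ n) • v with hv'
      have hnm : ((n : ℤ) : WithTop ℤ) + ((m : ℤ) : WithTop ℤ) = 0 := by
        norm_cast; omega
      have hval' : val v' = 0 := by
        rw [hv', hsmul, nu_pow, ← hm, hnm]
      have hu' : 0 < u v' := by
        rw [hv', u2, nu_pow]
        calc (0 : WithTop ℤ) = (n : ℤ) + (m : ℤ) := hnm.symm
          _ = (n : ℤ) + val v := by rw [hm]
          _ < (n : ℤ) + u v := (WithTop.add_lt_add_iff_left (WithTop.coe_ne_top)).mpr hlt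
      exact key2 v' hval' hu'

theorem statement3 {V : Type*} [AddCommGroup V] [Module FF V]
    (W : Submodule FF V) (val : V → WithTop ℤ) (hval : IsValuation val) :
    ((∀ u : V → WithTop ℤ, IsValuation u → (∀ w ∈ W, u w = val w) →
        (∀ v : V, val v ≤ u v) → ∀ v : V, u v = val v) ↔
      ((∀ x : V, x ∈ W → 0 ≤ val x →
          (∃ y : V, 0 ≤ val y ∧ x = qq • y) →
          ∃ y : V, (y ∈ W ∧ 0 ≤ val y) ∧ x = qq • y) ∧
        (∀ x : V, 0 ≤ val x →
          ∃ y : V, (y ∈ W ∧ 0 ≤ val y) ∧ ∃ z : V, 0 ≤ val z ∧ x - y = qq • z))) ∧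
    ((∀ u : V → WithTop ℤ, IsValuation u → (∀ w ∈ W, u w = val w) →
        (∀ v : V, val v ≤ u v) → ∀ v : V, u v = val v) ↔
      (∀ x : V, 0 ≤ val x →
        ∃ y : V, 0 ≤ val y ∧ ((x - qq • y) ∈ W ∧ 0 ≤ val (x - qq • y)))) := by
  have h13 := key_equiv W val hval
  refine ⟨?_, h13⟩
  rw [h13]
  constructor
  · intro h3
    constructor
    · rintro x hxW hx0 ⟨y, hy, hxy⟩
      have hyW : y ∈ W := by
        have : y = qq⁻¹ • x := by rw [hxy, inv_smul_smul₀ qq_ne_zero]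
        rw [this]
        exact W.smul_mem _ hxW
      exact ⟨y, ⟨hyW, hy⟩, hxy⟩
    · intro x hx
      obtain ⟨y, hy, hyW, hy2⟩ := h3 x hx
      exact ⟨x - qq • y, ⟨hyW, hy2⟩, y, hy, by abel⟩
  · rintro ⟨_, hB⟩ x hx
    obtain ⟨y, ⟨hyW, hy0⟩, z, hz0, hxz⟩ := hB x hx
    have hxy : x - qq • z = y := by rw [← hxz]; abel
    exact ⟨z, hz0, by rw [hxy]; exact hyW, by rw [hxy]; exact hy0⟩

end
end

section
/- Define a second total order <' on A×B by: (a,b) <' (c,d) iff a > c, or (a = c and b < d). For M ∈ B(A,B) let w'_M be the product of the generators w(a,b) over all (a,b) with m_{ab} = 1, taken in increasing order with respect to <'. Then w_M = w'_M in W(A,B) for every M ∈ B(A,B). -/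
noncomputable section

/-- Defining relations of the q-deformed exterior algebra `W(A,B)`, on the free algebra
on generators `w(a,b)`, `(a,b) ∈ A × B`. -/
inductive WRel (A B : Set ℤ) :
    FreeAlgebra FF (↥A × ↥B) → FreeAlgebra FF (↥A × ↥B) → Prop
  | sq (a : ↥A) (b : ↥B) :
      WRel A B (FreeAlgebra.ι FF ((a, b) : ↥A × ↥B) * FreeAlgebra.ι FF ((a, b) : ↥A × ↥B)) 0
  | col (a c : ↥A) (b : ↥B) (h : (c : ℤ) < (a : ℤ)) :
      WRel A B (FreeAlgebra.ι FF ((a, b) : ↥A × ↥B) * FreeAlgebra.ι FF ((c, b) : ↥A × ↥B))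
        (-(qq • (FreeAlgebra.ι FF ((c, b) : ↥A × ↥B) * FreeAlgebra.ι FF ((a, b) : ↥A × ↥B))))
  | row (a : ↥A) (b d : ↥B) (h : (b : ℤ) < (d : ℤ)) :
      WRel A B (FreeAlgebra.ι FF ((a, b) : ↥A × ↥B) * FreeAlgebra.ι FF ((a, d) : ↥A × ↥B))
        (qq⁻¹ • (FreeAlgebra.ι FF ((a, d) : ↥A × ↥B) * FreeAlgebra.ι FF ((a, b) : ↥A × ↥B)))
  | comm (a c : ↥A) (b d : ↥B) (h1 : (a : ℤ) < (c : ℤ)) (h2 : (b : ℤ) < (d : ℤ)) :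
      WRel A B (FreeAlgebra.ι FF ((a, b) : ↥A × ↥B) * FreeAlgebra.ι FF ((c, d) : ↥A × ↥B))
        (FreeAlgebra.ι FF ((c, d) : ↥A × ↥B) * FreeAlgebra.ι FF ((a, b) : ↥A × ↥B))
  | str (a c : ↥A) (b d : ↥B) (h1 : (c : ℤ) < (a : ℤ)) (h2 : (b : ℤ) < (d : ℤ)) :
      WRel A B (FreeAlgebra.ι FF ((a, b) : ↥A × ↥B) * FreeAlgebra.ι FF ((c, d) : ↥A × ↥B))
        (FreeAlgebra.ι FF ((c, d) : ↥A × ↥B) * FreeAlgebra.ι FF ((a, b) : ↥A × ↥B) -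
          (qq - qq⁻¹) •
            (FreeAlgebra.ι FF ((c, b) : ↥A × ↥B) * FreeAlgebra.ι FF ((a, d) : ↥A × ↥B)))

/-- The q-deformed exterior algebra `W(A,B)`. -/
abbrev WAlg (A B : Set ℤ) : Type := RingQuot (WRel A B)

/-- The generator `w(a,b)` of `W(A,B)`. -/
def wg (A B : Set ℤ) (p : ↥A × ↥B) : WAlg A B :=
  RingQuot.mkAlgHom FF (WRel A B) (FreeAlgebra.ι FF p)

/-- The total order on positions: `(a,b) < (c,d)` iff `b < d`, or `b = d` and `a > c`;
`wr` is the associated reflexive total relation (`≤`). -/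
def wr (A B : Set ℤ) (p q : ↥A × ↥B) : Prop :=
  (p.2 : ℤ) < (q.2 : ℤ) ∨ ((p.2 : ℤ) = (q.2 : ℤ) ∧ (q.1 : ℤ) ≤ (p.1 : ℤ))

instance (A B : Set ℤ) : DecidableRel (wr A B) := fun p q => by
  unfold wr; infer_instance

instance (A B : Set ℤ) : IsTrans (↥A × ↥B) (wr A B) := by
  constructor
  intro p q r h1 h2
  unfold wr at h1 h2 ⊢
  rcases h1 with h1 | ⟨h1, h1'⟩ <;> rcases h2 with h2 | ⟨h2, h2'⟩
  · exact Or.inl (by linarith)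
  · exact Or.inl (by linarith)
  · exact Or.inl (by linarith)
  · exact Or.inr ⟨by linarith, by linarith⟩

instance (A B : Set ℤ) : IsAntisymm (↥A × ↥B) (wr A B) := by
  constructor
  intro p q h1 h2
  unfold wr at h1 h2
  have hb : (p.2 : ℤ) = (q.2 : ℤ) := by
    rcases h1 with h1 | ⟨h1, h1'⟩ <;> rcases h2 with h2 | ⟨h2, h2'⟩ <;> linarith
  have ha : (p.1 : ℤ) = (q.1 : ℤ) := by
    rcases h1 with h1 | ⟨h1, h1'⟩ <;> rcases h2 with h2 | ⟨h2, h2'⟩ <;> linarith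
  exact Prod.ext_iff.mpr ⟨Subtype.ext ha, Subtype.ext hb⟩

instance (A B : Set ℤ) : IsTotal (↥A × ↥B) (wr A B) := by
  constructor
  intro p q
  unfold wr
  rcases lt_trichotomy ((p.2 : ℤ)) ((q.2 : ℤ)) with h | h | h
  · exact Or.inl (Or.inl h)
  · rcases le_total ((q.1 : ℤ)) ((p.1 : ℤ)) with h' | h'
    · exact Or.inl (Or.inr ⟨h, h'⟩)
    · exact Or.inr (Or.inr ⟨h.symm, h'⟩)
  · exact Or.inr (Or.inl h)

/-- The standard monomial `w_M` attached to a finitely supported `{0,1}`-matrix `M`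
(identified with the finite set of positions of its `1` entries): the product of the
generators `w(a,b)` over the positions of `M`, in increasing order for `<`. -/
def wMon (A B : Set ℤ) (M : Finset (↥A × ↥B)) : WAlg A B :=
  ((M.sort (wr A B)).map (wg A B)).prod

/-- The second total order: `(a,b) <' (c,d)` iff `a > c`, or `a = c` and `b < d`;
`wr'` is the associated reflexive total relation (`≤'`). -/
def wr' (A B : Set ℤ) (p q : ↥A × ↥B) : Prop :=
  (q.1 : ℤ) < (p.1 : ℤ) ∨ ((p.1 : ℤ) = (q.1 : ℤ) ∧ (p.2 : ℤ) ≤ (q.2 : ℤ))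

instance (A B : Set ℤ) : DecidableRel (wr' A B) := fun p q => by
  unfold wr'; infer_instance

instance (A B : Set ℤ) : IsTrans (↥A × ↥B) (wr' A B) := by
  constructor
  intro p q r h1 h2
  unfold wr' at h1 h2 ⊢
  rcases h1 with h1 | ⟨h1, h1'⟩ <;> rcases h2 with h2 | ⟨h2, h2'⟩
  · exact Or.inl (by linarith)
  · exact Or.inl (by linarith)
  · exact Or.inl (by linarith)
  · exact Or.inr ⟨by linarith, by linarith⟩

instance (A B : Set ℤ) : IsAntisymm (↥A × ↥B) (wr' A B) := by
  constructor
  intro p q h1 h2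
  unfold wr' at h1 h2
  have ha : (p.1 : ℤ) = (q.1 : ℤ) := by
    rcases h1 with h1 | ⟨h1, h1'⟩ <;> rcases h2 with h2 | ⟨h2, h2'⟩ <;> linarith
  have hb : (p.2 : ℤ) = (q.2 : ℤ) := by
    rcases h1 with h1 | ⟨h1, h1'⟩ <;> rcases h2 with h2 | ⟨h2, h2'⟩ <;> linarith
  exact Prod.ext_iff.mpr ⟨Subtype.ext ha, Subtype.ext hb⟩

instance (A B : Set ℤ) : IsTotal (↥A × ↥B) (wr' A B) := by
  constructor
  intro p q
  unfold wr'
  rcases lt_trichotomy ((q.1 : ℤ)) ((p.1 : ℤ)) with h | h | h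
  · exact Or.inl (Or.inl h)
  · rcases le_total ((p.2 : ℤ)) ((q.2 : ℤ)) with h' | h'
    · exact Or.inl (Or.inr ⟨h.symm, h'⟩)
    · exact Or.inr (Or.inr ⟨h, h'⟩)
  · exact Or.inr (Or.inl h)

/-- The standard monomial `w'_M`: the product of the generators over the positions of `M`,
in increasing order for `<'`. -/
def wMon' (A B : Set ℤ) (M : Finset (↥A × ↥B)) : WAlg A B :=
  ((M.sort (wr' A B)).map (wg A B)).prod

/-!
STATEMENT 7.  For every finitely supported `{0,1}`-matrix `M ∈ B(A,B)`, the ordered products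
of its generators with respect to the two total orders `<` and `<'` coincide: `w_M = w'_M`.
-/


section Aux

variable {A B : Set ℤ}

lemma wg_comm {q p : ↥A × ↥B} (h1 : (q.1 : ℤ) < (p.1 : ℤ))
    (h2 : (q.2 : ℤ) < (p.2 : ℤ)) :
    wg A B q * wg A B p = wg A B p * wg A B q := by
  have := RingQuot.mkAlgHom_rel FF (WRel.comm q.1 p.1 q.2 p.2 h1 h2)
  simpa [wg, map_mul] using this

lemma prod_pull_front (p : ↥A × ↥B) :
    ∀ (t s : List (↥A × ↥B)), (∀ q ∈ t, wg A B q * wg A B p = wg A B p * wg A B q) →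
    ((t ++ p :: s).map (wg A B)).prod = wg A B p * ((t ++ s).map (wg A B)).prod := by
  intro t
  induction t with
  | nil => intro s _; simp
  | cons a t ih =>
    intro s h
    simp only [List.cons_append, List.map_cons, List.prod_cons]
    rw [ih s (fun q hq => h q (List.mem_cons_of_mem _ hq)), ← mul_assoc,
        h a (List.mem_cons_self), mul_assoc]

lemma perm_cons_erase {p : ↥A × ↥B} {M : Finset (↥A × ↥B)} (hp : p ∈ M) :
    (p :: (M.erase p).toList).Perm M.toList := by
  rw [← Multiset.coe_eq_coe]
  show p ::ₘ ((M.erase p).toList : Multiset _) = (M.toList : Multiset _)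
  simp only [Finset.coe_toList, Finset.erase_val]
  exact Multiset.cons_erase (by simpa using hp)

lemma wMonP_step {p : ↥A × ↥B} {M : Finset (↥A × ↥B)} (hp : p ∈ M)
    (hmin : ∀ q ∈ M, wr' A B p q) :
    wMon' A B M = wg A B p * wMon' A B (M.erase p) := by
  have heq : M.sort (wr' A B) = p :: (M.erase p).sort (wr' A B) := by
    apply (fun hp hs1 hs2 => List.Perm.eq_of_pairwise' hs1 hs2 hp)
      ((Finset.sort_perm_toList _ _).trans ((perm_cons_erase hp).symm.trans
        ((Finset.sort_perm_toList (M.erase p) (wr' A B)).symm.cons p)))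
      (Finset.pairwise_sort _ _)
    refine List.pairwise_cons.mpr ⟨?_, Finset.pairwise_sort _ _⟩
    intro q hq
    exact hmin q (Finset.mem_of_mem_erase ((Finset.mem_sort _).mp hq))
  rw [wMon', heq]
  simp [wMon']

lemma wMon_step {p : ↥A × ↥B} {M : Finset (↥A × ↥B)} (hp : p ∈ M)
    (hmin : ∀ q ∈ M, wr' A B p q) :
    wMon A B M = wg A B p * wMon A B (M.erase p) := by
  have hpl : p ∈ M.sort (wr A B) := (Finset.mem_sort _).mpr hp
  obtain ⟨l1, l2, hl⟩ := List.append_of_mem hpl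
  have hnd : (M.sort (wr A B)).Nodup := Finset.sort_nodup _ _
  have hsorted : (M.sort (wr A B)).Pairwise (wr A B) := Finset.pairwise_sort _ _
  rw [hl] at hnd hsorted hpl
  have hpnot : p ∉ l1 := fun h => (List.nodup_append.mp hnd).2.2 p h p (List.mem_cons_self) rfl
  have hcomm : ∀ q ∈ l1, wg A B q * wg A B p = wg A B p * wg A B q := by
    intro q hq
    have hqM : q ∈ M := (Finset.mem_sort (wr A B)).mp (hl ▸ List.mem_append_left _ hq)
    have hqp : wr A B q p := by
      have := List.pairwise_append.mp hsorted
      exact this.2.2 q hq p (List.mem_cons_self)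
    have hne : q ≠ p := fun h => hpnot (h ▸ hq)
    have hpq : wr' A B p q := hmin q hqM
    have hne2 : ((q.1 : ℤ) ≠ (p.1 : ℤ)) ∨ ((q.2 : ℤ) ≠ (p.2 : ℤ)) := by
      by_contra hcon
      push_neg at hcon
      exact hne (Prod.ext_iff.mpr ⟨Subtype.ext hcon.1, Subtype.ext hcon.2⟩)
    unfold wr at hqp
    unfold wr' at hpq
    have h2 : (q.2 : ℤ) < (p.2 : ℤ) := by
      rcases hqp with h | ⟨h, h3⟩
      · exact h
      · exfalso
        rcases hpq with h4 | ⟨h4, h5⟩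
        · linarith
        · rcases hne2 with hx | hx <;> [exact hx h4.symm; exact hx h]
    have h1 : (q.1 : ℤ) < (p.1 : ℤ) := by
      rcases hpq with h | ⟨h, h3⟩
      · exact h
      · linarith
    exact wg_comm h1 h2
  have herase : (M.erase p).sort (wr A B) = l1 ++ l2 := by
    have hperm1 : (p :: (l1 ++ l2)).Perm (M.sort (wr A B)) := by
      rw [hl]; exact List.perm_middle.symm
    have hperm2 : (p :: (l1 ++ l2)).Perm (p :: (M.erase p).sort (wr A B)) :=
      hperm1.trans ((Finset.sort_perm_toList _ _).trans ((perm_cons_erase hp).symm.trans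
        ((Finset.sort_perm_toList (M.erase p) (wr A B)).symm.cons p)))
    have hs2 : (l1 ++ l2).Pairwise (wr A B) := hsorted.sublist
      (List.Sublist.append (List.Sublist.refl l1) (List.sublist_cons_self p l2))
    exact List.Perm.eq_of_pairwise' (Finset.pairwise_sort _ _) hs2 (hperm2.cons_inv).symm
  rw [wMon, hl, prod_pull_front p l1 l2 hcomm, wMon, herase]

end Aux

theorem statement7 (A B : Set ℤ) (hA : A.Nonempty) (hB : B.Nonempty)
    (hAint : ∀ x ∈ A, ∀ y ∈ A, ∀ z : ℤ, x ≤ z → z ≤ y → z ∈ A)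
    (hBint : ∀ x ∈ B, ∀ y ∈ B, ∀ z : ℤ, x ≤ z → z ≤ y → z ∈ B)
    (M : Finset (↥A × ↥B)) :
    wMon A B M = wMon' A B M := by
  induction M using Finset.strongInductionOn with
  | _ M ih =>
    rcases M.eq_empty_or_nonempty with rfl | hM
    · simp [wMon, wMon']
    · have hne : M.sort (wr' A B) ≠ [] := by
        intro h
        rcases hM with ⟨x, hx⟩
        have := (Finset.mem_sort (wr' A B)).mpr hx
        rw [h] at this; simp at this
      obtain ⟨p, t, hpt⟩ := List.exists_cons_of_ne_nil hne
      have hpM : p ∈ M := (Finset.mem_sort (wr' A B)).mp (hpt ▸ List.mem_cons_self)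
      have hmin : ∀ q ∈ M, wr' A B p q := by
        intro q hq
        have hql : q ∈ p :: t := hpt ▸ (Finset.mem_sort (wr' A B)).mpr hq
        rcases List.mem_cons.mp hql with rfl | hqt
        · exact Or.inr ⟨rfl, le_refl _⟩
        · have hs : (p :: t).Pairwise (wr' A B) := hpt ▸ Finset.pairwise_sort _ _
          exact (List.pairwise_cons.mp hs).1 q hqt
      rw [wMon_step hpM hmin, wMonP_step hpM hmin,
        ih (M.erase p) (Finset.erase_ssubset hpM)]


end
end

section
/- The only vector v ∈ T satisfying K_h v = v for all h ∈ P∨ and e_i v = 0 for all i ∈ ℤ_{>0} is v = 0. Consequently, the U-submodule N spanned by {v_m ⊗ v_{n∨} : m ≠ n} ∪ {q·v_n ⊗ v_{n∨} + v_{n+1} ⊗ v_{(n+1)∨} : n ≥ 1} has no U-module complement in T; i.e. the short exact sequence 0 → N → T → T/N → 0 of U-modules does not split. -/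
noncomputable section

/-- Integer powers `q^n`. -/
def qz (n : ℤ) : FF := qq ^ n

/-- The dual weight lattice `P∨`: the free abelian group on `{ε∨_i : i ∈ ℤ_{>0}}`. -/
abbrev PV : Type := ℕ+ →₀ ℤ

/-- The coroot `h_i = ε∨_i − ε∨_{i+1}`. -/
def coroot (i : ℕ+) : PV := Finsupp.single i 1 - Finsupp.single (i + 1) 1

/-- Generators of `U = U_q(gl_{>0})`: `e_i`, `f_i` for `i ∈ ℤ_{>0}` and `K_h` for `h ∈ P∨`. -/
inductive GGen : Type
  | e (i : ℕ+)
  | f (i : ℕ+)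
  | K (h : PV)

/-- Defining relations of `U_q(gl_{>0})`, with `⟨h, α_i⟩ = h i − h (i+1)` and
`t_i = K_{ε∨_i − ε∨_{i+1}}`. -/
inductive GRel : FreeAlgebra FF GGen → FreeAlgebra FF GGen → Prop
  | Kzero : GRel (FreeAlgebra.ι FF (GGen.K 0)) 1
  | Kadd (h h' : PV) :
      GRel (FreeAlgebra.ι FF (GGen.K h) * FreeAlgebra.ι FF (GGen.K h'))
        (FreeAlgebra.ι FF (GGen.K (h + h')))
  | Ke (h : PV) (i : ℕ+) :
      GRel (FreeAlgebra.ι FF (GGen.K h) * FreeAlgebra.ι FF (GGen.e i) *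
          FreeAlgebra.ι FF (GGen.K (-h)))
        (qz (h i - h (i + 1)) • FreeAlgebra.ι FF (GGen.e i))
  | Kf (h : PV) (i : ℕ+) :
      GRel (FreeAlgebra.ι FF (GGen.K h) * FreeAlgebra.ι FF (GGen.f i) *
          FreeAlgebra.ι FF (GGen.K (-h)))
        (qz (-(h i - h (i + 1))) • FreeAlgebra.ι FF (GGen.f i))
  | ef_eq (i : ℕ+) :
      GRel (FreeAlgebra.ι FF (GGen.e i) * FreeAlgebra.ι FF (GGen.f i) -
          FreeAlgebra.ι FF (GGen.f i) * FreeAlgebra.ι FF (GGen.e i))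
        ((qq - qq⁻¹)⁻¹ •
          (FreeAlgebra.ι FF (GGen.K (coroot i)) - FreeAlgebra.ι FF (GGen.K (-coroot i))))
  | ef_ne (i j : ℕ+) (h : i ≠ j) :
      GRel (FreeAlgebra.ι FF (GGen.e i) * FreeAlgebra.ι FF (GGen.f j))
        (FreeAlgebra.ι FF (GGen.f j) * FreeAlgebra.ι FF (GGen.e i))
  | ee_comm (i j : ℕ+) (h : 2 ≤ |(i : ℤ) - (j : ℤ)|) :
      GRel (FreeAlgebra.ι FF (GGen.e i) * FreeAlgebra.ι FF (GGen.e j))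
        (FreeAlgebra.ι FF (GGen.e j) * FreeAlgebra.ι FF (GGen.e i))
  | ff_comm (i j : ℕ+) (h : 2 ≤ |(i : ℤ) - (j : ℤ)|) :
      GRel (FreeAlgebra.ι FF (GGen.f i) * FreeAlgebra.ι FF (GGen.f j))
        (FreeAlgebra.ι FF (GGen.f j) * FreeAlgebra.ι FF (GGen.f i))
  | ee_serre (i j : ℕ+) (h : |(i : ℤ) - (j : ℤ)| = 1) :
      GRel (FreeAlgebra.ι FF (GGen.e i) ^ 2 * FreeAlgebra.ι FF (GGen.e j) -
          (qq + qq⁻¹) •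
            (FreeAlgebra.ι FF (GGen.e i) * FreeAlgebra.ι FF (GGen.e j) *
              FreeAlgebra.ι FF (GGen.e i)) +
          FreeAlgebra.ι FF (GGen.e j) * FreeAlgebra.ι FF (GGen.e i) ^ 2) 0
  | ff_serre (i j : ℕ+) (h : |(i : ℤ) - (j : ℤ)| = 1) :
      GRel (FreeAlgebra.ι FF (GGen.f i) ^ 2 * FreeAlgebra.ι FF (GGen.f j) -
          (qq + qq⁻¹) •
            (FreeAlgebra.ι FF (GGen.f i) * FreeAlgebra.ι FF (GGen.f j) *
              FreeAlgebra.ι FF (GGen.f i)) +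
          FreeAlgebra.ι FF (GGen.f j) * FreeAlgebra.ι FF (GGen.f i) ^ 2) 0

/-- The quantized enveloping algebra `U = U_q(gl_{>0})`. -/
abbrev GAlg : Type := RingQuot GRel

/-- Generators of `U`. -/
def gg (g : GGen) : GAlg := RingQuot.mkAlgHom FF GRel (FreeAlgebra.ι FF g)

/-- The vector space `T` with basis `{v_m ⊗ v_{n∨} : m, n ∈ ℤ_{>0}}`. -/
abbrev TT : Type := (ℕ+ × ℕ+) →₀ FF

/-- The basis vector `v_m ⊗ v_{n∨}`. -/
def bas (m n : ℕ+) : TT := Finsupp.single (m, n) 1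

/-- Build a linear operator on `T` from its values on basis vectors. -/
def mkOp (vec : ℕ+ × ℕ+ → TT) : TT →ₗ[FF] TT :=
  Finsupp.lsum FF fun p => LinearMap.toSpanSingleton FF TT (vec p)

/-- The action of `K_h`: `K_h (v_m ⊗ v_{n∨}) = q^{⟨h,ε_m⟩ − ⟨h,ε_n⟩} (v_m ⊗ v_{n∨})`. -/
def Kop (h : PV) : TT →ₗ[FF] TT :=
  mkOp fun p => qz (h p.1 - h p.2) • bas p.1 p.2

/-- The action of `e_i`:
`e_i (v_m ⊗ v_{n∨}) = δ_{i,n} v_m ⊗ v_{(i+1)∨} + δ_{i+1,m} q^{δ_{i,n} − δ_{i+1,n}} v_i ⊗ v_{n∨}`. -/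
def eop (i : ℕ+) : TT →ₗ[FF] TT :=
  mkOp fun p =>
    (if p.2 = i then bas p.1 (i + 1) else 0) +
    (if p.1 = i + 1 then
        qz ((if p.2 = i then 1 else 0) - (if p.2 = i + 1 then 1 else 0)) • bas i p.2
      else 0)

/-- The action of `f_i`:
`f_i (v_m ⊗ v_{n∨}) = δ_{i,m} v_{i+1} ⊗ v_{n∨} + δ_{i+1,n} q^{δ_{i,m} − δ_{i+1,m}} v_m ⊗ v_{i∨}`. -/
def fop (i : ℕ+) : TT →ₗ[FF] TT :=
  mkOp fun p =>
    (if p.1 = i then bas (i + 1) p.2 else 0) +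
    (if p.2 = i + 1 then
        qz ((if p.1 = i then 1 else 0) - (if p.1 = i + 1 then 1 else 0)) • bas p.1 i
      else 0)

/-- The subspace `N ⊆ T` spanned by `{v_m ⊗ v_{n∨} : m ≠ n}` together with
`{q·v_n ⊗ v_{n∨} + v_{n+1} ⊗ v_{(n+1)∨} : n ∈ ℤ_{>0}}`. -/
def NN : Submodule FF TT :=
  Submodule.span FF
    ({x : TT | ∃ m n : ℕ+, m ≠ n ∧ x = bas m n} ∪
      {x : TT | ∃ n : ℕ+, x = qq • bas n n + bas (n + 1) (n + 1)})

lemma qq_ne_one : qq ≠ 1 := by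
  intro h
  have := congrArg (RatFunc.eval (RingHom.id ℚ) 0) h
  simp [qq, RatFunc.eval_X] at this

lemma mkOp_single (vec : ℕ+ × ℕ+ → TT) (p : ℕ+ × ℕ+) (c : FF) :
    mkOp vec (Finsupp.single p c) = c • vec p := by
  simp [mkOp]

lemma mkOp_coeff (vec : ℕ+ × ℕ+ → TT) (v : TT) (p0 : ℕ+ × ℕ+) :
    mkOp vec v p0 = v.sum fun a c => c * vec a p0 := by
  simp [mkOp, Finsupp.lsum_apply, Finsupp.sum_apply, LinearMap.toSpanSingleton_apply]

lemma bas_coeff (m n : ℕ+) (p : ℕ+ × ℕ+) :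
    bas m n p = if (m, n) = p then 1 else 0 := by
  simp [bas, Finsupp.single_apply]

lemma Kop_coeff (h : PV) (v : TT) (p : ℕ+ × ℕ+) :
    Kop h v p = qz (h p.1 - h p.2) * v p := by
  rw [Kop, mkOp_coeff]
  have : ∀ a : ℕ+ × ℕ+, ∀ c : FF,
      c * (qz (h a.1 - h a.2) • bas a.1 a.2) p
        = if a = p then c * qz (h p.1 - h p.2) else 0 := by
    intro a c
    rw [Finsupp.smul_apply, bas_coeff]
    by_cases hap : a = p
    · simp [hap]
    · have : (a.1, a.2) ≠ p := by simpa using hap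
      simp [hap, this]
  rw [Finsupp.sum]
  rw [Finset.sum_congr rfl (fun a _ => this a (v a))]
  rw [Finset.sum_ite_eq' v.support p (fun a => v a * qz (h p.1 - h p.2))]
  by_cases hp : p ∈ v.support
  · simp [hp, mul_comm]
  · simp only [hp, if_false]
    rw [Finsupp.notMem_support_iff.mp hp, mul_zero]

lemma pnat_ne_succ (i : ℕ+) : i ≠ i + 1 := by
  intro h
  have := congrArg (fun x : ℕ+ => (x : ℕ)) h
  simp at this

lemma qz_neg_one : qz (-1) = qq⁻¹ := by
  simp [qz]

lemma qz_one : qz 1 = qq := by simp [qz]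

lemma eop_coeff (i : ℕ+) (v : TT) :
    eop i v (i, i + 1) = v (i, i) + qq⁻¹ * v (i + 1, i + 1) := by
  rw [eop, mkOp_coeff]
  have key : ∀ a : ℕ+ × ℕ+, ∀ c : FF,
      c * ((if a.2 = i then bas a.1 (i + 1) else 0) +
        (if a.1 = i + 1 then
          qz ((if a.2 = i then 1 else 0) - (if a.2 = i + 1 then 1 else 0)) • bas i a.2
        else 0)) (i, i + 1)
      = (if a = (i, i) then c else 0) + (if a = (i + 1, i + 1) then c * qq⁻¹ else 0) := by
    intro a c
    rw [Finsupp.add_apply, mul_add]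
    congr 1
    · by_cases h2 : a.2 = i
      · rw [if_pos h2, bas_coeff]
        by_cases h1 : a.1 = i
        · have : a = (i, i) := Prod.ext h1 h2
          simp [this]
        · have hne : a ≠ (i, i) := fun hc => h1 (by rw [hc])
          have : (a.1, i + 1) ≠ ((i : ℕ+), i + 1) := by
            simp only [ne_eq, Prod.mk.injEq]; tauto
          simp [hne, this]
      · have hne : a ≠ (i, i) := fun hc => h2 (by rw [hc])
        simp [h2, hne]
    · by_cases h1 : a.1 = i + 1
      · rw [if_pos h1]
        by_cases h2 : a.2 = i + 1
        · have ha : a = (i + 1, i + 1) := Prod.ext h1 h2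
          have hni : a.2 ≠ i := by rw [h2]; exact (pnat_ne_succ i).symm
          rw [if_pos ha, if_neg hni, if_pos h2]
          rw [Finsupp.smul_apply, bas_coeff]
          rw [if_pos (by rw [h2])]
          rw [zero_sub, qz_neg_one, smul_eq_mul, mul_one]
        · have ha : a ≠ (i + 1, i + 1) := fun hc => h2 (by rw [hc])
          have : ((i : ℕ+), a.2) ≠ ((i : ℕ+), i + 1) := by
            simp only [ne_eq, Prod.mk.injEq]; tauto
          rw [if_neg ha, Finsupp.smul_apply, bas_coeff, if_neg this]
          simp
      · have ha : a ≠ (i + 1, i + 1) := fun hc => h1 (by rw [hc])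
        simp [h1, ha]
  rw [Finsupp.sum]
  rw [Finset.sum_congr rfl (fun a _ => key a (v a))]
  rw [Finset.sum_add_distrib]
  rw [Finset.sum_ite_eq' v.support ((i, i) : ℕ+ × ℕ+) (fun a => v a)]
  rw [Finset.sum_ite_eq' v.support ((i + 1, i + 1) : ℕ+ × ℕ+) (fun a => v a * qq⁻¹)]
  by_cases h1 : ((i, i) : ℕ+ × ℕ+) ∈ v.support <;>
    by_cases h2 : ((i + 1, i + 1) : ℕ+ × ℕ+) ∈ v.support <;>
      simp only [h1, h2, if_true, if_false]
  · ring
  · rw [Finsupp.notMem_support_iff.mp h2]; ring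
  · rw [Finsupp.notMem_support_iff.mp h1]; ring
  · rw [Finsupp.notMem_support_iff.mp h1, Finsupp.notMem_support_iff.mp h2]; ring

lemma part1 (v : TT) (hK : ∀ h : PV, Kop h v = v) (he : ∀ i : ℕ+, eop i v = 0) :
    v = 0 := by
  have offd : ∀ p : ℕ+ × ℕ+, p.1 ≠ p.2 → v p = 0 := by
    intro p hp
    have h0 := congrArg (fun w : TT => w p) (hK (Finsupp.single p.1 1))
    simp only [Kop_coeff] at h0
    rw [Finsupp.single_eq_same, Finsupp.single_eq_of_ne' hp] at h0
    have hq : qz (1 - 0) = qq := by rw [sub_zero, qz_one]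
    rw [hq] at h0
    have : (qq - 1) * v p = 0 := by rw [sub_mul, h0]; ring
    rcases mul_eq_zero.mp this with h | h
    · exact absurd (sub_eq_zero.mp h) qq_ne_one
    · exact h
  have recur : ∀ i : ℕ+, v (i + 1, i + 1) = -qq * v (i, i) := by
    intro i
    have h0 := congrArg (fun w : TT => w (i, i + 1)) (he i)
    simp only [Finsupp.coe_zero, Pi.zero_apply] at h0
    rw [eop_coeff] at h0
    have : qq * (v (i, i) + qq⁻¹ * v (i + 1, i + 1)) = qq * 0 := by rw [h0]
    rw [mul_zero, mul_add, ← mul_assoc, mul_inv_cancel₀ qq_ne_zero, one_mul] at this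
    linear_combination this
  by_contra hv
  have hS : (v.support.image Prod.fst).Nonempty :=
    (Finsupp.support_nonempty_iff.mpr hv).image Prod.fst
  set M := (v.support.image Prod.fst).max' hS with hM
  obtain ⟨p, hps, hp1⟩ := Finset.mem_image.mp ((v.support.image Prod.fst).max'_mem hS)
  have hdiag : p.2 = p.1 := by
    by_contra hne
    exact (Finsupp.mem_support_iff.mp hps) (offd p (fun h => hne h.symm))
  have hvM : v (M, M) ≠ 0 := by
    have : p = (M, M) := Prod.ext (by rw [hp1, ← hM]) (by rw [hdiag, hp1, ← hM])
    rw [← this]; exact Finsupp.mem_support_iff.mp hps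
  have hvM1 : v (M + 1, M + 1) ≠ 0 := by
    rw [recur M]
    exact mul_ne_zero (neg_ne_zero.mpr qq_ne_zero) hvM
  have hmem : ((M + 1 : ℕ+)) ∈ v.support.image Prod.fst :=
    Finset.mem_image.mpr ⟨(M + 1, M + 1), Finsupp.mem_support_iff.mpr hvM1, rfl⟩
  have hle := Finset.le_max' _ _ hmem
  rw [← hM] at hle
  have : (M : ℕ) + 1 ≤ (M : ℕ) := by exact_mod_cast hle
  omega

lemma bas_mem_NN (m n : ℕ+) (h : m ≠ n) : bas m n ∈ NN :=
  Submodule.subset_span (Or.inl ⟨m, n, h, rfl⟩)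

lemma gen2_mem_NN (n : ℕ+) : qq • bas n n + bas (n + 1) (n + 1) ∈ NN :=
  Submodule.subset_span (Or.inr ⟨n, rfl⟩)

lemma single_eq_smul_bas (p : ℕ+ × ℕ+) (c : FF) :
    Finsupp.single p c = c • bas p.1 p.2 := by
  rw [bas, Finsupp.smul_single, smul_eq_mul, mul_one]

lemma Kop_sub_mem (h : PV) (x : TT) : Kop h x - x ∈ NN := by
  induction x using Finsupp.induction_linear with
  | zero => simp [NN, Submodule.zero_mem]
  | add f g hf hg =>
      have := NN.add_mem hf hg
      have heq : Kop h (f + g) - (f + g) = (Kop h f - f) + (Kop h g - g) := by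
        rw [map_add]; abel
      rw [heq]; exact this
  | single p c =>
      rw [single_eq_smul_bas, map_smul]
      have : Kop h (bas p.1 p.2) = qz (h p.1 - h p.2) • bas p.1 p.2 := by
        rw [Kop, bas, mkOp_single, one_smul]; rfl
      rw [this]
      by_cases hd : p.1 = p.2
      · have : qz (h p.1 - h p.2) = 1 := by rw [hd, sub_self]; simp [qz]
        rw [this, one_smul, sub_self]
        exact NN.zero_mem
      · have heq : c • qz (h p.1 - h p.2) • bas p.1 p.2 - c • bas p.1 p.2
            = (c * (qz (h p.1 - h p.2) - 1)) • bas p.1 p.2 := by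
          rw [smul_smul, ← sub_smul, mul_sub, mul_one]
        rw [heq]
        exact NN.smul_mem _ (bas_mem_NN _ _ hd)

lemma eop_mem (i : ℕ+) (x : TT) : eop i x ∈ NN := by
  induction x using Finsupp.induction_linear with
  | zero => simp [NN, Submodule.zero_mem]
  | add f g hf hg => rw [map_add]; exact NN.add_mem hf hg
  | single p c =>
      obtain ⟨m, n⟩ := p
      rw [eop, mkOp_single]
      apply NN.smul_mem
      dsimp only
      by_cases h2 : n = i
      · subst h2
        by_cases h1 : m = n + 1
        · subst h1
          have hne : n ≠ n + 1 := pnat_ne_succ n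
          simp only [if_pos rfl, if_neg hne, if_true, sub_zero, qz_one]
          have := gen2_mem_NN n
          convert this using 1
          abel
        · simp only [if_pos rfl, if_neg h1, add_zero]
          exact bas_mem_NN _ _ h1
      · by_cases h1 : m = i + 1
        · subst h1
          simp only [if_neg h2, zero_add, if_pos rfl]
          apply NN.smul_mem
          exact bas_mem_NN _ _ (fun hc => h2 hc.symm)
        · simp only [if_neg h2, if_neg h1, zero_add]
          exact NN.zero_mem

def ww : ℕ+ × ℕ+ → FF := fun p => if p.1 = p.2 then (-qq) ^ ((p.1 : ℕ) - 1) else 0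

def phi : TT →ₗ[FF] FF := Finsupp.lsum FF fun p => LinearMap.toSpanSingleton FF FF (ww p)

lemma phi_bas (m n : ℕ+) : phi (bas m n) = ww (m, n) := by
  simp [phi, bas]

set_option synthInstance.maxHeartbeats 1000000 in
lemma NN_le_ker : NN ≤ LinearMap.ker phi := by
  rw [NN, Submodule.span_le]
  rintro x (⟨m, n, hmn, rfl⟩ | ⟨n, rfl⟩)
  · rw [SetLike.mem_coe, LinearMap.mem_ker, phi_bas, ww, if_neg hmn]
  · rw [SetLike.mem_coe, LinearMap.mem_ker, map_add, map_smul, phi_bas, phi_bas]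
    rw [ww, ww, if_pos rfl, if_pos rfl]
    obtain ⟨k, hk⟩ : ∃ k, (n : ℕ) = k + 1 := ⟨(n : ℕ) - 1, (Nat.succ_pred_eq_of_pos n.pos).symm⟩
    have h1 : ((n : ℕ+) : ℕ) - 1 = k := by omega
    have h2 : (((n + 1 : ℕ+)) : ℕ) - 1 = k + 1 := by
      rw [PNat.add_coe, PNat.one_coe]; omega
    rw [h1, h2, pow_succ, smul_eq_mul]
    ring

lemma bas_one_not_mem : bas 1 1 ∉ NN := by
  intro hmem
  have := NN_le_ker hmem
  rw [LinearMap.mem_ker, phi_bas, ww, if_pos rfl] at this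
  simp at this

theorem statement12' :
    (∀ v : TT, (∀ h : PV, Kop h v = v) → (∀ i : ℕ+, eop i v = 0) → v = 0) ∧
    ¬ ∃ P : Submodule FF TT,
        (∀ (i : ℕ+), ∀ x ∈ P, eop i x ∈ P) ∧
        (∀ (h : PV), ∀ x ∈ P, Kop h x ∈ P) ∧
        IsCompl NN P := by
  constructor
  · exact part1
  · rintro ⟨P, heP, hKP, hc⟩
    have hPbot : ∀ x ∈ P, x = 0 := by
      intro x hx
      apply part1 x
      · intro h
        have hmem : Kop h x - x ∈ P := P.sub_mem (hKP h x hx) hx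
        have hN : Kop h x - x ∈ NN := Kop_sub_mem h x
        have h0 := Submodule.disjoint_def.mp hc.disjoint _ hN hmem
        exact sub_eq_zero.mp h0
      · intro i
        exact Submodule.disjoint_def.mp hc.disjoint _ (eop_mem i x) (heP i x hx)
    have hP : P = ⊥ := (Submodule.eq_bot_iff P).mpr hPbot
    have hNtop : NN = ⊤ := by
      have hcd := hc.codisjoint
      rw [hP] at hcd
      exact codisjoint_bot.mp hcd
    exact bas_one_not_mem (hNtop ▸ Submodule.mem_top)

theorem statement12 :
    (∀ v : TT, (∀ h : PV, Kop h v = v) → (∀ i : ℕ+, eop i v = 0) → v = 0) ∧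
    ¬ ∃ P : Submodule FF TT,
        (∀ (i : ℕ+), ∀ x ∈ P, eop i x ∈ P) ∧
        (∀ (i : ℕ+), ∀ x ∈ P, fop i x ∈ P) ∧
        (∀ (h : PV), ∀ x ∈ P, Kop h x ∈ P) ∧
        IsCompl NN P := by
  constructor
  · exact part1
  · rintro ⟨P, heP, _hfP, hKP, hc⟩
    have hPbot : ∀ x ∈ P, x = 0 := by
      intro x hx
      apply part1 x
      · intro h
        have hmem : Kop h x - x ∈ P := P.sub_mem (hKP h x hx) hx
        have hN : Kop h x - x ∈ NN := Kop_sub_mem h x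
        have h0 := Submodule.disjoint_def.mp hc.disjoint _ hN hmem
        exact sub_eq_zero.mp h0
      · intro i
        exact Submodule.disjoint_def.mp hc.disjoint _ (eop_mem i x) (heP i x hx)
    have hP : P = ⊥ := (Submodule.eq_bot_iff P).mpr hPbot
    have hNtop : NN = ⊤ := by
      have hcd := hc.codisjoint
      rw [hP] at hcd
      exact codisjoint_bot.mp hcd
    exact bas_one_not_mem (hNtop ▸ Submodule.mem_top)

end
end
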